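/- If I = I_B and J = I_C are the toric ideals of integer vector configurations B = (b^α_β) and C = (c^α_γ) that are NA-homogeneous (i.e., there exist matrices with a_α = B·b^α_β = C·c^α_γ for all α, β, γ), then the toric fiber product I_B ×_A I_C equals the toric ideal of the vector configuration B ×_A C whose columns are the stacked vectors (b^α_β; c^α_γ) for α ∈ [d], β ∈ [d_α], γ ∈ [d'_α]. -/

import Mathlib

open MvPolynomial
open scoped TensorProduct Classical

noncomputable section

variable {K : Type*} [Field K] {d h : ℕ}

/-- The map `φ_S : K[z] → K[x] ⊗ K[y]`, `z^α_{β,γ} ↦ x^α_β ⊗ y^α_γ`. -/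
def phiS (K : Type*) [Field K] (dx dy : Fin d → ℕ) :
    MvPolynomial (Σ α : Fin d, Fin (dx α) × Fin (dy α)) K →ₐ[K]
      (MvPolynomial (Σ α : Fin d, Fin (dx α)) K ⊗[K]
        MvPolynomial (Σ α : Fin d, Fin (dy α)) K) :=
  aeval (fun s => (X ⟨s.1, s.2.1⟩ : MvPolynomial (Σ α : Fin d, Fin (dx α)) K) ⊗ₜ[K]
    (X ⟨s.1, s.2.2⟩ : MvPolynomial (Σ α : Fin d, Fin (dy α)) K))

/-- The composite map `(π_I ⊗ π_J) ∘ φ_S : K[z] → R ⊗ S`. -/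
def psiTFP (K : Type*) [Field K] (dx dy : Fin d → ℕ)
    (I : Ideal (MvPolynomial (Σ α : Fin d, Fin (dx α)) K))
    (J : Ideal (MvPolynomial (Σ α : Fin d, Fin (dy α)) K)) :
    MvPolynomial (Σ α : Fin d, Fin (dx α) × Fin (dy α)) K →ₐ[K]
      ((MvPolynomial (Σ α : Fin d, Fin (dx α)) K ⧸ I) ⊗[K]
        (MvPolynomial (Σ α : Fin d, Fin (dy α)) K ⧸ J)) :=
  (Algebra.TensorProduct.map (Ideal.Quotient.mkₐ K I) (Ideal.Quotient.mkₐ K J)).comp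
    (phiS K dx dy)

/-- The toric fiber product `I ×_A J = ker((π_I ⊗ π_J) ∘ φ_S)`. -/
def TFP (K : Type*) [Field K] (dx dy : Fin d → ℕ)
    (I : Ideal (MvPolynomial (Σ α : Fin d, Fin (dx α)) K))
    (J : Ideal (MvPolynomial (Σ α : Fin d, Fin (dy α)) K)) :
    Ideal (MvPolynomial (Σ α : Fin d, Fin (dx α) × Fin (dy α)) K) :=
  RingHom.ker (psiTFP K dx dy I J).toRingHom


/-- The toric ideal of a vector configuration `D : σ → V`. -/
def toricIdeal (K : Type*) [Field K] {σ V : Type*} [Fintype σ] [AddCommGroup V]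
    (D : σ → V) : Ideal (MvPolynomial σ K) :=
  Ideal.span {p | ∃ u v : σ →₀ ℕ, (∑ s, ((u s : ℤ) - (v s : ℤ)) • D s) = 0 ∧
    p = monomial u 1 - monomial v 1}

/-!
The monomial map `x^u ↦ t^(∑ uₛ dₛ)` from `K[x]` to the group algebra `K[G]` has kernel
exactly `I_D`: modulo binomials, every polynomial can be moved onto one chosen exponent per
weight, and on such polynomials the monomial map is injective. Hence `K[x]/I_B` and `K[y]/I_C`
map to `K[G₁ × G₂]` through the two factors, and composing `φ_S` with the product of these maps
is the monomial map of `B ×_A C`; this gives `I_B ×_A I_C ⊆ I_{B ×_A C}`. Conversely, for a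
binomial `z^u - z^v` of `B ×_A C`, the tensor factors of `φ_S(z^u)` and `φ_S(z^v)` agree
modulo `I_B` and `I_C` respectively.
-/

theorem map_sub_eq_zero_of_eq {M N F : Type*} [AddGroup M] [AddMonoid N] [FunLike F M N]
    [AddMonoidHomClass F M N] (φ : F) {a b : M} (h : φ a = φ b) : φ (a - b) = 0 := by
  rw [sub_eq_add_neg, map_add, h, ← map_add, add_neg_cancel, map_zero]

theorem aeval_X_tmul_X_monomial {R σ τ₁ τ₂ : Type*} [CommSemiring R] (f₁ : σ → τ₁)
    (f₂ : σ → τ₂) (u : σ →₀ ℕ) :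
    aeval (fun s => (X (f₁ s) : MvPolynomial τ₁ R) ⊗ₜ[R] (X (f₂ s) : MvPolynomial τ₂ R))
        (monomial u (1 : R)) =
      monomial (u.mapDomain f₁) 1 ⊗ₜ monomial (u.mapDomain f₂) 1 := by
  induction u using Finsupp.induction with
  | zero => simp [Algebra.TensorProduct.one_def]
  | single_add s n u _ _ ih =>
    rw [monomial_single_add, map_mul, ih, map_pow, aeval_X, Algebra.TensorProduct.tmul_pow,
      Algebra.TensorProduct.tmul_mul_tmul, Finsupp.mapDomain_add, Finsupp.mapDomain_add,
      Finsupp.mapDomain_single, Finsupp.mapDomain_single, monomial_single_add, monomial_single_add]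

section Toric

variable (K) {σ G H : Type*} [AddCommGroup G] [AddCommGroup H]

def toricWeight (D : σ → G) : (σ →₀ ℕ) →+ G :=
  (Finsupp.linearCombination ℕ D).toAddMonoidHom

def toricMap (D : σ → G) : MvPolynomial σ K →ₐ[K] AddMonoidAlgebra K G :=
  AddMonoidAlgebra.mapDomainAlgHom K K (toricWeight D)

theorem toricMap_apply (D : σ → G) (p : MvPolynomial σ K) :
    toricMap K D p = AddMonoidAlgebra.mapDomain (toricWeight D) p :=
  rfl

theorem toricMap_monomial (D : σ → G) (u : σ →₀ ℕ) (r : K) :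
    toricMap K D (monomial u r) = AddMonoidAlgebra.single (toricWeight D u) r := by
  rw [toricMap_apply, ← single_eq_monomial, AddMonoidAlgebra.mapDomain_single]

theorem toricMap_X (D : σ → G) (s : σ) :
    toricMap K D (X s) = AddMonoidAlgebra.single (D s) 1 := by
  simp [X, toricMap_monomial, toricWeight]

theorem toricWeight_comp (D : σ → G) (f : G →+ H) (u : σ →₀ ℕ) :
    toricWeight (f ∘ D) u = f (toricWeight D u) := by
  simp [toricWeight, Finsupp.linearCombination_apply, Finsupp.sum]

theorem toricWeight_mapDomain {τ : Type*} (D : σ → G) (f : τ → σ) (u : τ →₀ ℕ) :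
    toricWeight D (u.mapDomain f) = toricWeight (D ∘ f) u :=
  Finsupp.linearCombination_mapDomain ..

theorem toricWeight_prodMk (D : σ → G) (D' : σ → H) (u : σ →₀ ℕ) :
    toricWeight (fun s => (D s, D' s)) u = (toricWeight D u, toricWeight D' u) := by
  ext <;> simp [toricWeight, Finsupp.linearCombination_apply, Finsupp.sum, Prod.fst_sum,
    Prod.snd_sum]

variable [Fintype σ]

theorem sum_sub_zsmul_eq_zero_iff (D : σ → G) (u v : σ →₀ ℕ) :
    ∑ s, ((u s : ℤ) - (v s : ℤ)) • D s = 0 ↔ toricWeight D u = toricWeight D v := by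
  simp only [sub_smul, natCast_zsmul, Finset.sum_sub_distrib, sub_eq_zero, toricWeight,
    LinearMap.toAddMonoidHom_coe, Finsupp.linearCombination_apply, Finsupp.sum_fintype,
    zero_smul, implies_true]

theorem monomial_sub_monomial_mem_toricIdeal (D : σ → G) {u v : σ →₀ ℕ}
    (huv : toricWeight D u = toricWeight D v) :
    (monomial u 1 - monomial v 1 : MvPolynomial σ K) ∈ toricIdeal K D :=
  Ideal.subset_span ⟨u, v, (sum_sub_zsmul_eq_zero_iff D u v).2 huv, rfl⟩

theorem toricIdeal_le_ker {A F : Type*} [Semiring A] [FunLike F (MvPolynomial σ K) A]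
    [RingHomClass F (MvPolynomial σ K) A] (D : σ → G) (φ : F)
    (hφ : ∀ u v, toricWeight D u = toricWeight D v → φ (monomial u 1) = φ (monomial v 1)) :
    toricIdeal K D ≤ RingHom.ker φ := by
  rw [toricIdeal, Ideal.span_le]
  rintro _ ⟨u, v, huv, rfl⟩
  exact map_sub_eq_zero_of_eq φ (hφ u v ((sum_sub_zsmul_eq_zero_iff D u v).1 huv))

theorem sub_mapDomain_mem_toricIdeal (D : σ → G) {f : (σ →₀ ℕ) → σ →₀ ℕ}
    (hf : ∀ u, toricWeight D (f u) = toricWeight D u) (p : MvPolynomial σ K) :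
    p - AddMonoidAlgebra.mapDomain f p ∈ toricIdeal K D := by
  induction p using MvPolynomial.induction_on' with
  | monomial u r =>
    rw [← single_eq_monomial, AddMonoidAlgebra.mapDomain_single, single_eq_monomial,
      single_eq_monomial, ← mul_one r, ← smul_eq_mul, ← smul_monomial, ← smul_monomial,
      ← smul_sub]
    exact Submodule.smul_of_tower_mem _ r (monomial_sub_monomial_mem_toricIdeal K D (hf u).symm)
  | add p q hp hq =>
    rw [AddMonoidAlgebra.mapDomain_add, add_sub_add_comm]
    exact add_mem hp hq

theorem toricIdeal_eq_ker_toricMap (D : σ → G) :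
    toricIdeal K D = RingHom.ker (toricMap K D) := by
  refine le_antisymm (toricIdeal_le_ker K D _ fun u v huv => by simp [toricMap_monomial, huv]) ?_
  intro p hp
  rw [RingHom.mem_ker, toricMap_apply] at hp
  set rep := Function.invFun (toricWeight D)
  have hrep : ∀ u, toricWeight D (rep (toricWeight D u)) = toricWeight D u :=
    fun u => Function.invFun_eq ⟨u, rfl⟩
  have hzero : AddMonoidAlgebra.mapDomain (fun u => rep (toricWeight D u)) p = 0 := by
    rw [← AddMonoidAlgebra.mapDomain_zero rep, ← hp, AddMonoidAlgebra.ext_iff]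
    simp only [AddMonoidAlgebra.coeff_mapDomain]
    rw [← Finsupp.mapDomain_comp]
    rfl
  simpa [hzero] using sub_mapDomain_mem_toricIdeal K D hrep p

def toricLift (D : σ → G) (f : G →+ H) :
    MvPolynomial σ K ⧸ toricIdeal K D →ₐ[K] AddMonoidAlgebra K H :=
  Ideal.Quotient.liftₐ _ (toricMap K (f ∘ D)) fun _ hp => RingHom.mem_ker.1 <|
    toricIdeal_le_ker K D (toricMap K (f ∘ D))
      (fun u v huv => by simp [toricMap_monomial, toricWeight_comp, huv]) hp

theorem toricLift_mkₐ (D : σ → G) (f : G →+ H) (p : MvPolynomial σ K) :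
    toricLift K D f (Ideal.Quotient.mkₐ K _ p) = toricMap K (f ∘ D) p :=
  rfl

end Toric

section ToricFiberProduct

variable (K) {dx dy : Fin d → ℕ}

def tfpFst (s : Σ α : Fin d, Fin (dx α) × Fin (dy α)) : Σ α : Fin d, Fin (dx α) := ⟨s.1, s.2.1⟩

def tfpSnd (s : Σ α : Fin d, Fin (dx α) × Fin (dy α)) : Σ α : Fin d, Fin (dy α) := ⟨s.1, s.2.2⟩

/-- The configuration `B ×_A C`. -/
def stackConfig {G₁ G₂ : Type*} (D₁ : (Σ α : Fin d, Fin (dx α)) → G₁)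
    (D₂ : (Σ α : Fin d, Fin (dy α)) → G₂) (s : Σ α : Fin d, Fin (dx α) × Fin (dy α)) : G₁ × G₂ :=
  (D₁ (tfpFst s), D₂ (tfpSnd s))

variable (I : Ideal (MvPolynomial (Σ α : Fin d, Fin (dx α)) K))
  (J : Ideal (MvPolynomial (Σ α : Fin d, Fin (dy α)) K))

theorem psiTFP_monomial (u : (Σ α : Fin d, Fin (dx α) × Fin (dy α)) →₀ ℕ) :
    psiTFP K dx dy I J (monomial u 1) =
      Ideal.Quotient.mkₐ K I (monomial (u.mapDomain tfpFst) 1) ⊗ₜ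
        Ideal.Quotient.mkₐ K J (monomial (u.mapDomain tfpSnd) 1) := by
  change Algebra.TensorProduct.map _ _
    (aeval (fun s => X (tfpFst s) ⊗ₜ[K] X (tfpSnd s)) (monomial u 1)) = _
  rw [aeval_X_tmul_X_monomial tfpFst tfpSnd u, Algebra.TensorProduct.map_tmul]

theorem psiTFP_X (s : Σ α : Fin d, Fin (dx α) × Fin (dy α)) :
    psiTFP K dx dy I J (X s) =
      Ideal.Quotient.mkₐ K I (X (tfpFst s)) ⊗ₜ Ideal.Quotient.mkₐ K J (X (tfpSnd s)) := by
  simp [psiTFP, phiS, tfpFst, tfpSnd]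

variable {G₁ G₂ : Type*} [AddCommGroup G₁] [AddCommGroup G₂]
  (D₁ : (Σ α : Fin d, Fin (dx α)) → G₁) (D₂ : (Σ α : Fin d, Fin (dy α)) → G₂)

theorem toricWeight_stackConfig (u : (Σ α : Fin d, Fin (dx α) × Fin (dy α)) →₀ ℕ) :
    toricWeight (stackConfig D₁ D₂) u =
      (toricWeight D₁ (u.mapDomain tfpFst), toricWeight D₂ (u.mapDomain tfpSnd)) := by
  rw [toricWeight_mapDomain, toricWeight_mapDomain]
  exact toricWeight_prodMk _ _ u

theorem toricMap_stackConfig :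
    toricMap K (stackConfig D₁ D₂) =
      (Algebra.TensorProduct.productMap (toricLift K D₁ (AddMonoidHom.inl G₁ G₂))
        (toricLift K D₂ (AddMonoidHom.inr G₁ G₂))).comp
        (psiTFP K dx dy (toricIdeal K D₁) (toricIdeal K D₂)) := by
  refine MvPolynomial.algHom_ext fun s => ?_
  rw [AlgHom.comp_apply, psiTFP_X, Algebra.TensorProduct.productMap_apply_tmul, toricLift_mkₐ,
    toricLift_mkₐ, toricMap_X, toricMap_X, toricMap_X, AddMonoidAlgebra.single_mul_single, mul_one]
  simp [stackConfig]

theorem TFP_le_toricIdeal_stackConfig :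
    TFP K dx dy (toricIdeal K D₁) (toricIdeal K D₂) ≤ toricIdeal K (stackConfig D₁ D₂) := by
  intro p hp
  rw [toricIdeal_eq_ker_toricMap, RingHom.mem_ker, toricMap_stackConfig, AlgHom.comp_apply]
  have hp : psiTFP K dx dy _ _ p = 0 := hp
  rw [hp, map_zero]

theorem toricIdeal_stackConfig_le_TFP :
    toricIdeal K (stackConfig D₁ D₂) ≤ TFP K dx dy (toricIdeal K D₁) (toricIdeal K D₂) := by
  refine toricIdeal_le_ker K _ (psiTFP K dx dy _ _).toRingHom fun u v huv => ?_
  rw [toricWeight_stackConfig, toricWeight_stackConfig, Prod.mk.injEq] at huv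
  change psiTFP K dx dy _ _ (monomial u 1) = psiTFP K dx dy _ _ (monomial v 1)
  rw [psiTFP_monomial, psiTFP_monomial,
    Ideal.Quotient.mkₐ_eq_mk, Ideal.Quotient.mkₐ_eq_mk,
    Ideal.Quotient.eq.2 (monomial_sub_monomial_mem_toricIdeal K D₁ huv.1),
    Ideal.Quotient.eq.2 (monomial_sub_monomial_mem_toricIdeal K D₂ huv.2)]

theorem TFP_toricIdeal :
    TFP K dx dy (toricIdeal K D₁) (toricIdeal K D₂) = toricIdeal K (stackConfig D₁ D₂) :=
  le_antisymm (TFP_le_toricIdeal_stackConfig K D₁ D₂) (toricIdeal_stackConfig_le_TFP K D₁ D₂)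

end ToricFiberProduct

theorem tfp_of_toric_is_toric_general (K : Type*) [Field K] {d h1 h2 : ℕ}
    (dx dy : Fin d → ℕ)
    (b : (α : Fin d) → Fin (dx α) → Fin h1 → ℤ)
    (c : (α : Fin d) → Fin (dy α) → Fin h2 → ℤ) :
    TFP K dx dy (toricIdeal K (fun s : Σ α : Fin d, Fin (dx α) => b s.1 s.2))
        (toricIdeal K (fun s : Σ α : Fin d, Fin (dy α) => c s.1 s.2)) =
      toricIdeal K (fun s : Σ α : Fin d, Fin (dx α) × Fin (dy α) =>
        ((b s.1 s.2.1, c s.1 s.2.2) : (Fin h1 → ℤ) × (Fin h2 → ℤ))) :=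
  TFP_toricIdeal K _ _

/-- The toric fiber product of the `ℕ𝒜`-homogeneous toric ideals `I_B` and `I_C` is
the toric ideal of the stacked configuration `B ×_A C` with columns
`(b^α_β; c^α_γ)`. -/
theorem tfp_of_toric_is_toric (K : Type*) [Field K] {d h h1 h2 : ℕ}
    (a : Fin d → Fin h → ℤ) (dx dy : Fin d → ℕ)
    (b : (α : Fin d) → Fin (dx α) → Fin h1 → ℤ)
    (c : (α : Fin d) → Fin (dy α) → Fin h2 → ℤ)
    (B : Matrix (Fin h) (Fin h1) ℤ) (C : Matrix (Fin h) (Fin h2) ℤ)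
    (hb : ∀ (α : Fin d) (β : Fin (dx α)), B.mulVec (b α β) = a α)
    (hc : ∀ (α : Fin d) (γ : Fin (dy α)), C.mulVec (c α γ) = a α) :
    TFP K dx dy (toricIdeal K (fun s : Σ α : Fin d, Fin (dx α) => b s.1 s.2))
        (toricIdeal K (fun s : Σ α : Fin d, Fin (dy α) => c s.1 s.2)) =
      toricIdeal K (fun s : Σ α : Fin d, Fin (dx α) × Fin (dy α) =>
        ((b s.1 s.2.1, c s.1 s.2.2) : (Fin h1 → ℤ) × (Fin h2 → ℤ))) :=
  tfp_of_toric_is_toric_general K dx dy b c
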